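/- Suppose φ is an analytic self-map of the unit disk D, u ∈ H(D), 0<p<∞ and ω is normal on [0,1). Then lim_{|z|→1} (1−|z|²)|u(z)φ'(z)| / (ω(|φ(z)|)(1−|φ(z)|²)^{1+1/p}) = 0 if and only if both: lim_{|φ(z)|→1} (1−|z|²)|u(z)φ'(z)| / (ω(|φ(z)|)(1−|φ(z)|²)^{1+1/p}) = 0 and lim_{|z|→1} (1−|z|²)|u(z)φ'(z)| = 0. -/

import Mathlib

open MeasureTheory Complex Filter

noncomputable section

/-- The open unit disk in the complex plane. -/
def unitDisk : Set ℂ := Metric.ball 0 1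

/-- `ω` is a normal function with parameters `0 < s < t`:
`ω` is positive and continuous on `[0,1)`, `ω r / (1-r)^s` decreases to `0`
and `ω r / (1-r)^t` increases to `∞` as `r → 1⁻`. -/
def IsNormalWith (ω : ℝ → ℝ) (s t : ℝ) : Prop :=
  0 < s ∧ s < t ∧
  ContinuousOn ω (Set.Ico 0 1) ∧
  (∀ r ∈ Set.Ico (0:ℝ) 1, 0 < ω r) ∧
  (∀ r₁ ∈ Set.Ico (0:ℝ) 1, ∀ r₂ ∈ Set.Ico (0:ℝ) 1, r₁ ≤ r₂ →
    ω r₂ / (1 - r₂) ^ s ≤ ω r₁ / (1 - r₁) ^ s) ∧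
  Filter.Tendsto (fun r => ω r / (1 - r) ^ s) (nhdsWithin 1 (Set.Ico 0 1)) (nhds 0) ∧
  (∀ r₁ ∈ Set.Ico (0:ℝ) 1, ∀ r₂ ∈ Set.Ico (0:ℝ) 1, r₁ ≤ r₂ →
    ω r₁ / (1 - r₁) ^ t ≤ ω r₂ / (1 - r₂) ^ t) ∧
  Filter.Tendsto (fun r => ω r / (1 - r) ^ t) (nhdsWithin 1 (Set.Ico 0 1)) Filter.atTop

/-- `ω` is a normal function. -/
def IsNormal (ω : ℝ → ℝ) : Prop := ∃ s t : ℝ, IsNormalWith ω s t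

/-- `φ` is an analytic self-map of the unit disk. -/
def IsAnalyticSelfMap (φ : ℂ → ℂ) : Prop :=
  DifferentiableOn ℂ φ unitDisk ∧ Set.MapsTo φ unitDisk unitDisk

/-- The (unnormalized) integral `∫_D |f|^p ω(|z|)^p/(1-|z|) dA`. -/
def bergmanIntegral (p : ℝ) (ω : ℝ → ℝ) (f : ℂ → ℂ) : ENNReal :=
  ∫⁻ z in unitDisk,
    ENNReal.ofReal (‖f z‖ ^ p * ω (‖z‖) ^ p / (1 - ‖z‖))

/-- Membership in the Bergman-type space `H(p,p,ω)`. -/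
def MemBergmanType (p : ℝ) (ω : ℝ → ℝ) (f : ℂ → ℂ) : Prop :=
  DifferentiableOn ℂ f unitDisk ∧ bergmanIntegral p ω f < ⊤

/-- The norm on `H(p,p,ω)` (the factor `π⁻¹` normalizes the area measure so `A(D) = 1`). -/
def bergmanTypeNorm (p : ℝ) (ω : ℝ → ℝ) (f : ℂ → ℂ) : ℝ :=
  (Real.pi⁻¹ * (bergmanIntegral p ω f).toReal) ^ (1 / p)

/-- The (unnormalized) integral `∫_D |f|^p dA`. -/
def apIntegral (p : ℝ) (f : ℂ → ℂ) : ENNReal :=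
  ∫⁻ z in unitDisk, ENNReal.ofReal (‖f z‖ ^ p)

/-- Membership in the Bergman space `A^p`. -/
def MemAp (p : ℝ) (f : ℂ → ℂ) : Prop :=
  DifferentiableOn ℂ f unitDisk ∧ apIntegral p f < ⊤

/-- The norm on `A^p` (with the normalized area measure). -/
def apNorm (p : ℝ) (f : ℂ → ℂ) : ℝ :=
  (Real.pi⁻¹ * (apIntegral p f).toReal) ^ (1 / p)

/-- Membership in the Bloch space `B`. -/
def MemBloch (f : ℂ → ℂ) : Prop :=
  DifferentiableOn ℂ f unitDisk ∧
  ∃ M : ℝ, ∀ z ∈ unitDisk, (1 - ‖z‖ ^ 2) * ‖deriv f z‖ ≤ M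

/-- The Bloch norm `‖f‖_B = |f(0)| + sup_{z∈D} (1-|z|²)|f'(z)|`. -/
def blochNorm (f : ℂ → ℂ) : ℝ :=
  ‖f 0‖ +
    ⨆ z : unitDisk, (1 - ‖z.1‖ ^ 2) * ‖deriv f z.1‖

/-- Membership in the little Bloch space `B₀`. -/
def MemLittleBloch (f : ℂ → ℂ) : Prop :=
  MemBloch f ∧
  ∀ ε : ℝ, 0 < ε → ∃ r ∈ Set.Ioo (0:ℝ) 1, ∀ z ∈ unitDisk,
    r < ‖z‖ → (1 - ‖z‖ ^ 2) * ‖deriv f z‖ < ε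

/-- The weighted composition operator `uC_φ f = u ⬝ (f ∘ φ)`. -/
def wComp (u φ : ℂ → ℂ) (f : ℂ → ℂ) : ℂ → ℂ := fun z => u z * f (φ z)

/-- The composition operator `C_φ f = f ∘ φ`. -/
def compOp (φ : ℂ → ℂ) (f : ℂ → ℂ) : ℂ → ℂ := fun z => f (φ z)

/-- The sequence `F` converges to `0` uniformly on compact subsets of the unit disk. -/
def TendstoZeroOnCompacts (F : ℕ → ℂ → ℂ) : Prop :=
  ∀ K : Set ℂ, K ⊆ unitDisk → IsCompact K →
    TendstoUniformlyOn F (fun _ => 0) Filter.atTop K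

/-- The operator `T` is bounded from the space with membership predicate `S` and norm `N`
into the Bloch-type space with membership predicate `Tgt` (normed by the Bloch norm). -/
def OpBounded (S : (ℂ → ℂ) → Prop) (N : (ℂ → ℂ) → ℝ) (Tgt : (ℂ → ℂ) → Prop)
    (T : (ℂ → ℂ) → ℂ → ℂ) : Prop :=
  (∀ f, S f → Tgt (T f)) ∧
  ∃ C : ℝ, 0 < C ∧ ∀ f, S f → blochNorm (T f) ≤ C * N f

/-- The operator `T` is compact: it is bounded and maps bounded sequences converging to `0`
uniformly on compacta to sequences converging to `0` in Bloch norm. -/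
def OpCompact (S : (ℂ → ℂ) → Prop) (N : (ℂ → ℂ) → ℝ) (Tgt : (ℂ → ℂ) → Prop)
    (T : (ℂ → ℂ) → ℂ → ℂ) : Prop :=
  OpBounded S N Tgt T ∧
  ∀ F : ℕ → ℂ → ℂ, (∀ n, S (F n)) → (∃ M : ℝ, ∀ n, N (F n) ≤ M) →
    TendstoZeroOnCompacts F →
    Filter.Tendsto (fun n => blochNorm (T (F n))) Filter.atTop (nhds 0)

/-- `lim_{|φ(z)|→1} E(z) = 0`. -/
def LimPhiBoundaryZero (φ : ℂ → ℂ) (E : ℂ → ℝ) : Prop :=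
  ∀ ε : ℝ, 0 < ε → ∃ δ ∈ Set.Ioo (0:ℝ) 1, ∀ z ∈ unitDisk,
    δ < ‖φ z‖ → E z < ε

/-- `lim_{|z|→1} E(z) = 0`. -/
def LimBoundaryZero (E : ℂ → ℝ) : Prop :=
  ∀ ε : ℝ, 0 < ε → ∃ r ∈ Set.Ioo (0:ℝ) 1, ∀ z ∈ unitDisk,
    r < ‖z‖ → E z < ε

/-! With `W(z) = ω(|φ z|)(1-|φ z|²)^(1+1/p)`, the quotient is `N/W` for the Bloch-type
numerator `N`. Since `ω ≤ ω(0)`, `W` is bounded above, so `N/W → 0` forces `N → 0`; and since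
`|φ(z)| → 1` forces `|z| → 1`, it also gives the limit as `|φ(z)| → 1`. Conversely, `W` is bounded
below on each set `|φ(z)| ≤ δ < 1`, where `N → 0` therefore controls `N/W`, while on
`|φ(z)| > δ` the quotient is small by hypothesis. -/

open Set Metric

lemma norm_mem_Ico_of_mem_unitDisk {z : ℂ} (hz : z ∈ unitDisk) : ‖z‖ ∈ Ico 0 1 :=
  ⟨norm_nonneg z, mem_ball_zero_iff.1 hz⟩

lemma one_sub_sq_pos_of_mem_Ico {r : ℝ} (hr : r ∈ Ico 0 1) : 0 < 1 - r ^ 2 :=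
  sub_pos.2 (pow_lt_one₀ hr.1 hr.2 two_ne_zero)

section LimitsOnTheDisk

variable {φ : ℂ → ℂ} {E F : ℂ → ℝ}

lemma LimBoundaryZero.mono_const_mul {C : ℝ} (hE : LimBoundaryZero E) (hC : 0 < C)
    (hF : ∀ z ∈ unitDisk, F z ≤ C * E z) : LimBoundaryZero F := by
  intro ε hε
  obtain ⟨r, hr, hrE⟩ := hE (ε / C) (div_pos hε hC)
  refine ⟨r, hr, fun z hz hrz => ?_⟩
  calc F z ≤ C * E z := hF z hz
    _ < C * (ε / C) := mul_lt_mul_of_pos_left (hrE z hz hrz) hC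
    _ = ε := mul_div_cancel₀ ε hC.ne'

/-- A continuous self-map of the disk keeps `|φ|` away from `1` on every compact disk `|z| ≤ r`,
so `|φ(z)| → 1` forces `|z| → 1`. -/
lemma LimBoundaryZero.limPhiBoundaryZero (hφc : ContinuousOn φ unitDisk)
    (hφ : MapsTo φ unitDisk unitDisk) (hE : LimBoundaryZero E) : LimPhiBoundaryZero φ E := by
  intro ε hε
  obtain ⟨r, hr, hrE⟩ := hE ε hε
  have hball : closedBall (0 : ℂ) r ⊆ unitDisk := closedBall_subset_ball hr.2
  obtain ⟨z₀, hz₀, hmax⟩ := (isCompact_closedBall (0 : ℂ) r).exists_isMaxOn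
    (nonempty_closedBall.2 hr.1.le) (continuous_norm.comp_continuousOn (hφc.mono hball))
  have hφz₀ : ‖φ z₀‖ < 1 := mem_ball_zero_iff.1 (hφ (hball hz₀))
  refine ⟨(‖φ z₀‖ + 1) / 2, ⟨by positivity, by linarith⟩, fun z hz hδz => hrE z hz ?_⟩
  by_contra! hzr
  have : ‖φ z‖ ≤ ‖φ z₀‖ := hmax (mem_closedBall_zero_iff.2 hzr)
  linarith

lemma LimPhiBoundaryZero.limBoundaryZero_div {N W : ℂ → ℝ}
    (hW : ∀ δ ∈ Ioo (0 : ℝ) 1, ∃ c > 0, ∀ z ∈ unitDisk, ‖φ z‖ ≤ δ → c ≤ W z)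
    (h : LimPhiBoundaryZero φ fun z => N z / W z) (hN : LimBoundaryZero N) :
    LimBoundaryZero fun z => N z / W z := by
  intro ε hε
  obtain ⟨δ, hδ, hδE⟩ := h ε hε
  obtain ⟨c, hc, hcW⟩ := hW δ hδ
  obtain ⟨r, hr, hrN⟩ := hN (ε * c) (mul_pos hε hc)
  refine ⟨r, hr, fun z hz hrz => ?_⟩
  rcases lt_or_ge δ ‖φ z‖ with hφz | hφz
  · exact hδE z hz hφz
  · have hcWz := hcW z hz hφz
    rw [div_lt_iff₀ (hc.trans_le hcWz)]
    calc N z < ε * c := hrN z hz hrz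
      _ ≤ ε * W z := mul_le_mul_of_nonneg_left hcWz hε.le

end LimitsOnTheDisk

namespace IsNormal

variable {ω : ℝ → ℝ} (hω : IsNormal ω)
include hω

lemma continuousOn : ContinuousOn ω (Ico 0 1) := by
  obtain ⟨s, t, -, -, hcont, -⟩ := hω
  exact hcont

lemma pos {r : ℝ} (hr : r ∈ Ico 0 1) : 0 < ω r := by
  obtain ⟨s, t, -, -, -, hpos, -⟩ := hω
  exact hpos r hr

/-- From the decrease of `ω r / (1 - r)^s`: `ω r ≤ ω 0 (1 - r)^s ≤ ω 0`. -/
lemma apply_le_apply_zero {r : ℝ} (hr : r ∈ Ico 0 1) : ω r ≤ ω 0 := by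
  have h0 : (0 : ℝ) ∈ Ico 0 1 := ⟨le_rfl, one_pos⟩
  have hω0 := hω.pos h0
  obtain ⟨s, t, hs, -, -, -, hdec, -⟩ := hω
  have hdecr := hdec 0 h0 r hr hr.1
  rw [sub_zero, Real.one_rpow, div_one, div_le_iff₀ (Real.rpow_pos_of_pos (sub_pos.2 hr.2) s)]
    at hdecr
  calc ω r ≤ ω 0 * (1 - r) ^ s := hdecr
    _ ≤ ω 0 * 1 := mul_le_mul_of_nonneg_left
        (Real.rpow_le_one (sub_pos.2 hr.2).le (sub_le_self 1 hr.1) hs.le) hω0.le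
    _ = ω 0 := mul_one _

variable (e : ℝ)

lemma weight_pos {r : ℝ} (hr : r ∈ Ico 0 1) : 0 < ω r * (1 - r ^ 2) ^ e :=
  mul_pos (hω.pos hr) (Real.rpow_pos_of_pos (one_sub_sq_pos_of_mem_Ico hr) e)

lemma weight_le {r : ℝ} (hr : r ∈ Ico 0 1) (he : 0 ≤ e) : ω r * (1 - r ^ 2) ^ e ≤ ω 0 :=
  calc ω r * (1 - r ^ 2) ^ e ≤ ω r * 1 := mul_le_mul_of_nonneg_left
        (Real.rpow_le_one (one_sub_sq_pos_of_mem_Ico hr).le (sub_le_self 1 (sq_nonneg r)) he) (hω.pos hr).le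
    _ ≤ ω 0 := (mul_one (ω r)).trans_le (hω.apply_le_apply_zero hr)

lemma exists_pos_le_weight {δ : ℝ} (hδ : δ < 1) :
    ∃ c > 0, ∀ r ∈ Icc 0 δ, c ≤ ω r * (1 - r ^ 2) ^ e := by
  have hsub : Icc 0 δ ⊆ Ico (0 : ℝ) 1 := Icc_subset_Ico_right hδ
  have hcont : ContinuousOn (fun r => ω r * (1 - r ^ 2) ^ e) (Icc 0 δ) :=
    (hω.continuousOn.mono hsub).mul <| ContinuousOn.rpow_const (by fun_prop)
      fun r hr => Or.inl (one_sub_sq_pos_of_mem_Ico (hsub hr)).ne'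
  exact isCompact_Icc.exists_forall_le' hcont fun r hr => hω.weight_pos e (hsub hr)

end IsNormal

theorem lim_boundary_u_deriv_phi_iff_general (p : ℝ) (hp : 0 < p) (ω : ℝ → ℝ) (hω : IsNormal ω)
    (φ u : ℂ → ℂ) (hφ : IsAnalyticSelfMap φ) :
    LimBoundaryZero (fun z =>
        (1 - ‖z‖ ^ 2) * ‖u z * deriv φ z‖ /
          (ω (‖φ z‖) * (1 - ‖φ z‖ ^ 2) ^ (1 + 1 / p))) ↔
      (LimPhiBoundaryZero φ (fun z =>
          (1 - ‖z‖ ^ 2) * ‖u z * deriv φ z‖ /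
            (ω (‖φ z‖) * (1 - ‖φ z‖ ^ 2) ^ (1 + 1 / p))) ∧
       LimBoundaryZero (fun z =>
          (1 - ‖z‖ ^ 2) * ‖u z * deriv φ z‖)) := by
  constructor
  · intro h
    refine ⟨h.limPhiBoundaryZero hφ.1.continuousOn hφ.2,
      h.mono_const_mul (hω.pos ⟨le_rfl, one_pos⟩) fun z hz => ?_⟩
    have hN : 0 ≤ (1 - ‖z‖ ^ 2) * ‖u z * deriv φ z‖ := mul_nonneg
      (one_sub_sq_pos_of_mem_Ico (norm_mem_Ico_of_mem_unitDisk hz)).le (norm_nonneg _)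
    have hφz := norm_mem_Ico_of_mem_unitDisk (hφ.2 hz)
    rw [← div_le_iff₀' (hω.pos ⟨le_rfl, one_pos⟩)]
    exact div_le_div_of_nonneg_left hN (hω.weight_pos _ hφz) (hω.weight_le _ hφz (by positivity))
  · rintro ⟨hφlim, hlim⟩
    refine hφlim.limBoundaryZero_div (fun δ hδ => ?_) hlim
    obtain ⟨c, hc, hcle⟩ := hω.exists_pos_le_weight (1 + 1 / p) hδ.2
    exact ⟨c, hc, fun z hz hzδ => hcle _ ⟨norm_nonneg _, hzδ⟩⟩

/-- Lemma 4.3: `lim_{|z|→1}` of the second quantity vanishes iff `lim_{|φ(z)|→1}` vanishes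
and `(1-|z|²)|u(z)φ'(z)| → 0` as `|z| → 1`. -/
theorem lim_boundary_u_deriv_phi_iff (p : ℝ) (hp : 0 < p) (ω : ℝ → ℝ) (hω : IsNormal ω)
    (φ u : ℂ → ℂ) (hφ : IsAnalyticSelfMap φ) (hu : DifferentiableOn ℂ u unitDisk) :
    LimBoundaryZero (fun z =>
        (1 - ‖z‖ ^ 2) * ‖u z * deriv φ z‖ /
          (ω (‖φ z‖) * (1 - ‖φ z‖ ^ 2) ^ (1 + 1 / p))) ↔
      (LimPhiBoundaryZero φ (fun z =>
          (1 - ‖z‖ ^ 2) * ‖u z * deriv φ z‖ /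
            (ω (‖φ z‖) * (1 - ‖φ z‖ ^ 2) ^ (1 + 1 / p))) ∧
       LimBoundaryZero (fun z =>
          (1 - ‖z‖ ^ 2) * ‖u z * deriv φ z‖)) :=
  lim_boundary_u_deriv_phi_iff_general p hp ω hω φ u hφ

end
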